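/- arXiv:1805.10112 — 2 statements merged into one kernel-verified Lean document; each statement's English description precedes it below -/
import Mathlib

section
/- Let G = (V,E) be a finite connected simple graph with at least one edge. If μ is a pmf on Γ_G whose edge usage probability η_μ is constant on E, then necessarily η_μ(e) = (|V| − 1)/|E| for every e ∈ E, and μ is MEO-optimal, i.e., its expected overlap equals MEO(Γ_G). -/
noncomputable section
open scoped Classical
open Finset

variable {V : Type*} [Fintype V] [DecidableEq V]

/-- A pmf on a finite family `Γ` of edge sets. -/
def IsPmf (Γ : Finset (Finset (Sym2 V))) (μ : Finset (Sym2 V) → ℝ) : Prop :=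
  (∀ γ, 0 ≤ μ γ) ∧ (∀ γ, γ ∉ Γ → μ γ = 0) ∧ ∑ γ ∈ Γ, μ γ = 1

/-- Edge usage probability. -/
def eta (Γ : Finset (Finset (Sym2 V))) (μ : Finset (Sym2 V) → ℝ) (e : Sym2 V) : ℝ :=
  ∑ γ ∈ Γ.filter (fun γ => e ∈ γ), μ γ

/-- Expected overlap. -/
def EO (Γ : Finset (Finset (Sym2 V))) (μ : Finset (Sym2 V) → ℝ) : ℝ :=
  ∑ γ ∈ Γ, ∑ γ' ∈ Γ, ((γ ∩ γ').card : ℝ) * μ γ * μ γ'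

/-- Minimum expected overlap. -/
def MEO (Γ : Finset (Finset (Sym2 V))) : ℝ :=
  sInf {x : ℝ | ∃ μ, IsPmf Γ μ ∧ x = EO Γ μ}

/-- The set of spanning trees of `G`, as finsets of edges. -/
def spanningTrees (G : SimpleGraph V) : Finset (Finset (Sym2 V)) :=
  Finset.univ.filter (fun γ => ↑γ ⊆ G.edgeSet ∧
    (SimpleGraph.fromEdgeSet (↑γ : Set (Sym2 V))).Connected ∧
    γ.card = Fintype.card V - 1)

/-- Edges of `G` with both endpoints in `W`. -/
def edgesWithin (G : SimpleGraph V) (W : Finset V) : Finset (Sym2 V) :=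
  G.edgeFinset.filter (fun e => ∀ v ∈ e, v ∈ W)

/-- `γ` is a spanning tree of the subgraph of `G` induced by the vertex set `W`. -/
def IsSpanningTreeOn (G : SimpleGraph V) (W : Finset V) (γ : Finset (Sym2 V)) : Prop :=
  γ ⊆ edgesWithin G W ∧
    ((SimpleGraph.fromEdgeSet (↑γ : Set (Sym2 V))).induce (↑W : Set V)).Connected ∧
    γ.card = W.card - 1

def spanningTreesOn (G : SimpleGraph V) (W : Finset V) : Finset (Finset (Sym2 V)) :=
  Finset.univ.filter (IsSpanningTreeOn G W)

def Adm (Γ : Finset (Finset (Sym2 V))) (ρ : Sym2 V → ℝ) : Prop :=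
  (∀ e, 0 ≤ ρ e) ∧ ∀ γ ∈ Γ, 1 ≤ ∑ e ∈ γ, ρ e

def Mod2 (Eset : Finset (Sym2 V)) (Γ : Finset (Finset (Sym2 V))) : ℝ :=
  sInf {x : ℝ | ∃ ρ, Adm Γ ρ ∧ x = ∑ e ∈ Eset, (ρ e) ^ 2}

/-- A fair spanning tree. -/
def IsFair (G : SimpleGraph V) (γ : Finset (Sym2 V)) : Prop :=
  ∃ μ, IsPmf (spanningTrees G) μ ∧ EO (spanningTrees G) μ = MEO (spanningTrees G) ∧ 0 < μ γ

def IsFeasiblePartition (G : SimpleGraph V) (P : Finset (Finset V)) : Prop :=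
  2 ≤ P.card ∧ (∀ p ∈ P, p.Nonempty) ∧ (∀ v : V, ∃! p, p ∈ P ∧ v ∈ p) ∧
    ∀ p ∈ P, (G.induce (↑p : Set V)).Connected

/-- The edges of `G` joining distinct parts of the partition `P`. -/
def cutEdges (G : SimpleGraph V) (P : Finset (Finset V)) : Finset (Sym2 V) :=
  G.edgeFinset.filter (fun e => ¬ ∃ p ∈ P, ∀ v ∈ e, v ∈ p)

/-- `G` is homogeneous. -/
def IsHomogeneous (G : SimpleGraph V) : Prop :=
  ∃ μ, IsPmf (spanningTrees G) μ ∧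
    ∃ c : ℝ, ∀ e ∈ G.edgeFinset, eta (spanningTrees G) μ e = c

/-! Every spanning tree has `|V| - 1` edges, so for any pmf `ν` the edge usage probabilities sum
to `|V| - 1` over `E`, while `EO ν = ∑ e, η_ν(e)²`. Cauchy–Schwarz then gives
`EO ν ≥ (|V| - 1)² / |E|`, with equality when `η_ν` is constant. -/

section EdgeUsage

omit [Fintype V]

variable {Γ : Finset (Finset (Sym2 V))} {E : Finset (Sym2 V)} {μ : Finset (Sym2 V) → ℝ}

lemma card_inter_mul_mul_eq_sum {γ γ' : Finset (Sym2 V)} (hγ : γ ⊆ E) (a b : ℝ) :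
    ((γ ∩ γ').card : ℝ) * a * b =
      ∑ e ∈ E, (if e ∈ γ then a else 0) * (if e ∈ γ' then b else 0) := by
  have hfilter : E.filter (fun e => e ∈ γ ∧ e ∈ γ') = γ ∩ γ' := by
    ext e
    simp only [mem_filter, mem_inter]
    exact ⟨fun h => h.2, fun h => ⟨hγ h.1, h⟩⟩
  simp_rw [ite_zero_mul_ite_zero, ← sum_filter, hfilter, sum_const, nsmul_eq_mul, mul_assoc]

lemma EO_eq_sum_sq_eta (hΓ : ∀ γ ∈ Γ, γ ⊆ E) : EO Γ μ = ∑ e ∈ E, eta Γ μ e ^ 2 := by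
  simp_rw [EO, eta, sum_filter, sq, sum_mul_sum]
  calc ∑ γ ∈ Γ, ∑ γ' ∈ Γ, ((γ ∩ γ').card : ℝ) * μ γ * μ γ'
      = ∑ γ ∈ Γ, ∑ γ' ∈ Γ, ∑ e ∈ E,
          (if e ∈ γ then μ γ else 0) * (if e ∈ γ' then μ γ' else 0) :=
        sum_congr rfl fun γ hγ => sum_congr rfl fun γ' _ =>
          card_inter_mul_mul_eq_sum (hΓ γ hγ) _ _
    _ = _ := (sum_congr rfl fun _ _ => sum_comm).trans sum_comm

lemma sum_eta_eq_of_card_eq {k : ℕ} (hΓ : ∀ γ ∈ Γ, γ ⊆ E) (hk : ∀ γ ∈ Γ, γ.card = k)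
    (hμ : IsPmf Γ μ) : ∑ e ∈ E, eta Γ μ e = k := by
  simp_rw [eta, sum_filter]
  rw [sum_comm]
  calc ∑ γ ∈ Γ, ∑ e ∈ E, (if e ∈ γ then μ γ else 0)
      = ∑ γ ∈ Γ, (k : ℝ) * μ γ := sum_congr rfl fun γ hγ => by
        rw [← sum_filter, sum_const, filter_mem_eq_inter, inter_eq_right.mpr (hΓ γ hγ),
          hk γ hγ, nsmul_eq_mul]
    _ = k := by rw [← mul_sum, hμ.2.2, mul_one]

lemma sq_div_card_le_EO {k : ℕ} (hΓ : ∀ γ ∈ Γ, γ ⊆ E) (hk : ∀ γ ∈ Γ, γ.card = k)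
    (hμ : IsPmf Γ μ) : (k : ℝ) ^ 2 / E.card ≤ EO Γ μ := by
  rw [EO_eq_sum_sq_eta hΓ, ← sum_eta_eq_of_card_eq hΓ hk hμ]
  exact div_le_of_le_mul₀ (by positivity) (by positivity)
    (mul_comm (E.card : ℝ) _ ▸ sq_sum_le_card_mul_sum_sq)

lemma eq_div_card_of_forall_eta_eq {k : ℕ} {c : ℝ} (hΓ : ∀ γ ∈ Γ, γ ⊆ E)
    (hk : ∀ γ ∈ Γ, γ.card = k) (hμ : IsPmf Γ μ) (hE : E.Nonempty)
    (hc : ∀ e ∈ E, eta Γ μ e = c) : c = k / E.card := by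
  have hsum := sum_eta_eq_of_card_eq hΓ hk hμ
  rw [sum_congr rfl hc, sum_const, nsmul_eq_mul] at hsum
  rw [← hsum, mul_div_cancel_left₀ _ (by exact_mod_cast hE.card_pos.ne')]

lemma EO_eq_sq_div_card_of_forall_eta_eq {k : ℕ} {c : ℝ} (hΓ : ∀ γ ∈ Γ, γ ⊆ E)
    (hk : ∀ γ ∈ Γ, γ.card = k) (hμ : IsPmf Γ μ) (hE : E.Nonempty)
    (hc : ∀ e ∈ E, eta Γ μ e = c) : EO Γ μ = (k : ℝ) ^ 2 / E.card := by
  have hE' : (E.card : ℝ) ≠ 0 := by exact_mod_cast hE.card_pos.ne'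
  rw [EO_eq_sum_sq_eta hΓ, sum_congr rfl fun e he => by rw [hc e he], sum_const, nsmul_eq_mul,
    eq_div_card_of_forall_eta_eq hΓ hk hμ hE hc]
  field_simp

lemma MEO_eq_EO_of_forall_le (hμ : IsPmf Γ μ) (hle : ∀ ν, IsPmf Γ ν → EO Γ μ ≤ EO Γ ν) :
    MEO Γ = EO Γ μ :=
  IsLeast.csInf_eq ⟨⟨μ, hμ, rfl⟩, by rintro _ ⟨ν, hν, rfl⟩; exact hle ν hν⟩

end EdgeUsage

lemma subset_edgeFinset_of_mem_spanningTrees {G : SimpleGraph V} {γ : Finset (Sym2 V)}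
    (hγ : γ ∈ spanningTrees G) : γ ⊆ G.edgeFinset := fun _ he =>
  SimpleGraph.mem_edgeFinset.mpr ((mem_filter.mp hγ).2.1 he)

lemma card_of_mem_spanningTrees {G : SimpleGraph V} {γ : Finset (Sym2 V)}
    (hγ : γ ∈ spanningTrees G) : γ.card = Fintype.card V - 1 :=
  (mem_filter.mp hγ).2.2.2

/-- a pmf with constant edge usage probability has
`η_μ ≡ (|V|-1)/|E|` on `E` and is MEO-optimal. -/
theorem constant_usage_pmf_is_optimal
    {V : Type*} [Fintype V] [DecidableEq V]
    (G : SimpleGraph V) (hG : G.Connected) (hE : G.edgeFinset.Nonempty)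
    (μ : Finset (Sym2 V) → ℝ) (hμ : IsPmf (spanningTrees G) μ)
    (hconst : ∀ e ∈ G.edgeFinset, ∀ e' ∈ G.edgeFinset,
      eta (spanningTrees G) μ e = eta (spanningTrees G) μ e') :
    (∀ e ∈ G.edgeFinset,
      eta (spanningTrees G) μ e = ((Fintype.card V : ℝ) - 1) / (G.edgeFinset.card : ℝ)) ∧
    EO (spanningTrees G) μ = MEO (spanningTrees G) := by
  have hΓ : ∀ γ ∈ spanningTrees G, γ ⊆ G.edgeFinset :=
    fun _ => subset_edgeFinset_of_mem_spanningTrees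
  have hk : ∀ γ ∈ spanningTrees G, γ.card = Fintype.card V - 1 :=
    fun _ => card_of_mem_spanningTrees
  have hcard : ((Fintype.card V - 1 : ℕ) : ℝ) = Fintype.card V - 1 :=
    Nat.cast_pred (Fintype.card_pos_iff.mpr hG.nonempty)
  obtain ⟨e₀, he₀⟩ := hE
  have hc : ∀ e ∈ G.edgeFinset, eta (spanningTrees G) μ e = eta (spanningTrees G) μ e₀ :=
    fun e he => hconst e he e₀ he₀
  refine ⟨fun e he => ?_, (MEO_eq_EO_of_forall_le hμ fun ν hν => ?_).symm⟩
  · rw [hc e he, eq_div_card_of_forall_eta_eq hΓ hk hμ ⟨e₀, he₀⟩ hc, hcard]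
  · rw [EO_eq_sq_div_card_of_forall_eta_eq hΓ hk hμ ⟨e₀, he₀⟩ hc]
    exact sq_div_card_le_EO hΓ hk hν
end
end

section
/- Let G = (V,E) be a finite connected simple graph with at least one edge, let μ* be an MEO-optimal pmf on Γ_G, and let η* = η_{μ*}. Let γ* be a spanning tree with μ*(γ*) > 0, let e' = {x,y} be an edge of G not in γ*, and let C be the cycle formed by adding e' to γ* (i.e., e' together with the unique path in γ* from x to y). Then η*(e') = max_{e∈C} η*(e); equivalently, η*(e) ≤ η*(e') for every edge e on the unique path in γ* from x to y. -/
/-!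
Moving mass `t` from `γ*` to another spanning tree `γ'` changes the expected overlap by
`2 t (∑_{f ∈ γ'} η f - ∑_{f ∈ γ*} η f) + O(t²)`, because `∑_{γ'} |γ ∩ γ'| μ(γ') = ∑_{f ∈ γ} η(f)`.
Hence at an optimum every tree in the support has minimal `η`-weight among all spanning trees.
An edge `e` of the tree path from `x` to `y` lies on the cycle closed by `s(x, y)`, so exchanging
`e` for `s(x, y)` yields another spanning tree, and comparing weights gives `η e ≤ η s(x, y)`.
-/

noncomputable section
open scoped Classical
open Finset

variable {V : Type*} [Fintype V] [DecidableEq V]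

section Overlap

omit [Fintype V]

variable (Γ : Finset (Finset (Sym2 V))) (μ : Finset (Sym2 V) → ℝ)

lemma sum_card_inter_mul_eq_sum_eta (τ : Finset (Sym2 V)) :
    ∑ γ ∈ Γ, ((τ ∩ γ).card : ℝ) * μ γ = ∑ f ∈ τ, eta Γ μ f := by
  simp only [← filter_mem_eq_inter, card_filter, eta, sum_filter,
    Nat.cast_sum, Nat.cast_ite, Nat.cast_one, Nat.cast_zero, sum_mul, ite_mul, one_mul,
    zero_mul]
  exact sum_comm

lemma EO_add_smul (d : Finset (Sym2 V) → ℝ) (t : ℝ) :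
    EO Γ (μ + t • d) =
      EO Γ μ + 2 * t * ∑ γ ∈ Γ, d γ * ∑ f ∈ γ, eta Γ μ f + t ^ 2 * EO Γ d := by
  have hcross : ∑ γ ∈ Γ, ∑ γ' ∈ Γ, ((γ ∩ γ').card : ℝ) * d γ * μ γ' =
      ∑ γ ∈ Γ, d γ * ∑ f ∈ γ, eta Γ μ f := by
    refine sum_congr rfl fun γ _ => ?_
    rw [← sum_card_inter_mul_eq_sum_eta, mul_sum]
    exact sum_congr rfl fun γ' _ => by ring
  have hcross' : ∑ γ ∈ Γ, ∑ γ' ∈ Γ, ((γ ∩ γ').card : ℝ) * μ γ * d γ' =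
      ∑ γ ∈ Γ, d γ * ∑ f ∈ γ, eta Γ μ f := by
    rw [sum_comm, ← hcross]
    exact sum_congr rfl fun γ _ => sum_congr rfl fun γ' _ => by
      rw [inter_comm]; ring
  calc EO Γ (μ + t • d)
      = ∑ γ ∈ Γ, ∑ γ' ∈ Γ, (((γ ∩ γ').card : ℝ) * μ γ * μ γ'
          + t * (((γ ∩ γ').card : ℝ) * d γ * μ γ')
          + t * (((γ ∩ γ').card : ℝ) * μ γ * d γ')
          + t ^ 2 * (((γ ∩ γ').card : ℝ) * d γ * d γ')) :=
        sum_congr rfl fun γ _ => sum_congr rfl fun γ' _ => by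
          simp only [Pi.add_apply, Pi.smul_apply, smul_eq_mul]; ring
    _ = EO Γ μ + 2 * t * ∑ γ ∈ Γ, d γ * ∑ f ∈ γ, eta Γ μ f + t ^ 2 * EO Γ d := by
        simp only [sum_add_distrib, ← mul_sum, hcross, hcross']
        unfold EO; ring

variable {Γ μ}

lemma EO_nonneg (hμ : ∀ γ, 0 ≤ μ γ) : 0 ≤ EO Γ μ :=
  sum_nonneg fun γ _ => sum_nonneg fun γ' _ =>
    mul_nonneg (mul_nonneg (Nat.cast_nonneg _) (hμ γ)) (hμ γ')

lemma MEO_le_EO (hμ : IsPmf Γ μ) : MEO Γ ≤ EO Γ μ :=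
  csInf_le ⟨0, by rintro _ ⟨ν, hν, rfl⟩; exact EO_nonneg hν.1⟩ ⟨μ, hμ, rfl⟩

end Overlap

lemma nonneg_of_forall_mul_add_sq_nonneg {b c ε : ℝ} (hε : 0 < ε)
    (h : ∀ t, 0 < t → t ≤ ε → 0 ≤ b * t + c * t ^ 2) : 0 ≤ b := by
  by_contra! hb
  set t := min ε (-b / (|c| + 1))
  have hc : 0 < |c| + 1 := by positivity
  have ht : 0 < t := lt_min hε (div_pos (neg_pos.mpr hb) hc)
  have htb : t * (|c| + 1) ≤ -b := (le_div_iff₀ hc).mp (min_le_right _ _)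
  have := h t ht (min_le_left _ _)
  nlinarith [le_abs_self c, sq_nonneg t]

section Transfer

omit [Fintype V]

variable {Γ : Finset (Finset (Sym2 V))} {μ : Finset (Sym2 V) → ℝ} {γ γ' : Finset (Sym2 V)}

lemma IsPmf.add_smul_single_sub_single (hμ : IsPmf Γ μ) (hγ : γ ∈ Γ) (hγ' : γ' ∈ Γ)
    (hne : γ' ≠ γ) {t : ℝ} (ht : 0 ≤ t) (htμ : t ≤ μ γ) :
    IsPmf Γ (μ + t • (Pi.single γ' 1 - Pi.single γ 1)) := by
  obtain ⟨hnonneg, hsupp, hsum⟩ := hμ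
  refine ⟨fun τ => ?_, fun τ hτ => ?_, ?_⟩
  · simp only [Pi.add_apply, Pi.smul_apply, Pi.sub_apply, smul_eq_mul]
    rcases eq_or_ne τ γ with rfl | hτγ
    · rw [Pi.single_eq_of_ne' hne, Pi.single_eq_same]
      linarith
    · rw [Pi.single_eq_of_ne hτγ, sub_zero]
      have hsingle : 0 ≤ (Pi.single γ' 1 : Finset (Sym2 V) → ℝ) τ := by
        rw [Pi.single_apply]; split_ifs <;> norm_num
      exact add_nonneg (hnonneg τ) (mul_nonneg ht hsingle)
  · have hτγ : τ ≠ γ := by rintro rfl; exact hτ hγ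
    have hτγ' : τ ≠ γ' := by rintro rfl; exact hτ hγ'
    simp [hτγ, hτγ', hsupp τ hτ]
  · simp [sum_add_distrib, ← mul_sum, sum_sub_distrib, hγ, hγ', hsum]

lemma sum_eta_le_of_EO_eq_MEO (hμ : IsPmf Γ μ) (hopt : EO Γ μ = MEO Γ) (hγ : γ ∈ Γ)
    (hpos : 0 < μ γ) (hγ' : γ' ∈ Γ) : ∑ f ∈ γ, eta Γ μ f ≤ ∑ f ∈ γ', eta Γ μ f := by
  rcases eq_or_ne γ' γ with rfl | hne
  · rfl
  set d : Finset (Sym2 V) → ℝ := Pi.single γ' 1 - Pi.single γ 1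
  have hfirst : ∑ τ ∈ Γ, d τ * ∑ f ∈ τ, eta Γ μ f =
      ∑ f ∈ γ', eta Γ μ f - ∑ f ∈ γ, eta Γ μ f := by
    simp [d, sub_mul, sum_sub_distrib, Pi.single_apply, hγ, hγ']
  suffices 0 ≤ 2 * (∑ f ∈ γ', eta Γ μ f - ∑ f ∈ γ, eta Γ μ f) by linarith
  refine nonneg_of_forall_mul_add_sq_nonneg (c := EO Γ d) hpos fun t ht htμ => ?_
  have := MEO_le_EO (hμ.add_smul_single_sub_single hγ hγ' hne ht.le htμ)
  rw [EO_add_smul, hfirst, ← hopt] at this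
  linarith

end Transfer

namespace SimpleGraph

section Exchange

omit [Fintype V] [DecidableEq V]

lemma Walk.mem_of_mem_edges_fromEdgeSet {s : Set (Sym2 V)} {u v : V}
    (p : (fromEdgeSet s).Walk u v) {e : Sym2 V} (he : e ∈ p.edges) : e ∈ s :=
  ((edgeSet_fromEdgeSet s ▸ p.edges_subset_edgeSet he : e ∈ s \ _)).1

lemma connected_fromEdgeSet_exchange {s : Set (Sym2 V)} (hs : (fromEdgeSet s).Connected)
    {x y : V} (hxy : x ≠ y) (hnot : s(x, y) ∉ s) {p : (fromEdgeSet s).Walk x y} (hp : p.IsPath)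
    {e : Sym2 V} (he : e ∈ p.edges) : (fromEdgeSet (insert s(x, y) s \ {e})).Connected := by
  set K := fromEdgeSet (insert s(x, y) s)
  have hle : fromEdgeSet s ≤ K := fromEdgeSet_mono (Set.subset_insert _ _)
  have hadj : K.Adj x y := by simp [K, hxy]
  have hcycle : (Walk.cons hadj (p.mapLe hle).reverse).IsCycle := by
    refine (Walk.cons_isCycle_iff _ _).2 ⟨(hp.mapLe hle).reverse, fun hxyp => hnot ?_⟩
    rw [Walk.edges_reverse, List.mem_reverse, Walk.edges_mapLe_eq_edges] at hxyp
    exact p.mem_of_mem_edges_fromEdgeSet hxyp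
  have hbridge : ¬ K.IsBridge e := fun hb => hb.notMem_edges_of_isCycle hcycle (by
    rw [Walk.edges_cons, Walk.edges_reverse, Walk.edges_mapLe_eq_edges]
    exact List.mem_cons_of_mem _ (List.mem_reverse.2 he))
  induction e using Sym2.ind with
  | h a b =>
    rw [← deleteEdges_fromEdgeSet]
    exact (hs.mono hle).connected_delete_edge_of_not_isBridge hbridge

end Exchange

end SimpleGraph

lemma insert_erase_mem_spanningTrees {G : SimpleGraph V} {γ : Finset (Sym2 V)}
    (hγ : γ ∈ spanningTrees G) {x y : V} (hxy : G.Adj x y) (hnot : s(x, y) ∉ γ)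
    {p : (SimpleGraph.fromEdgeSet (↑γ : Set (Sym2 V))).Walk x y} (hp : p.IsPath)
    {e : Sym2 V} (he : e ∈ p.edges) : insert s(x, y) (γ.erase e) ∈ spanningTrees G := by
  simp only [spanningTrees, mem_filter, mem_univ, true_and] at hγ ⊢
  obtain ⟨hsub, hconn, hcard⟩ := hγ
  have heγ : e ∈ γ := p.mem_of_mem_edges_fromEdgeSet he
  have hne : s(x, y) ≠ e := fun h => hnot (h ▸ heγ)
  refine ⟨?_, ?_, ?_⟩
  · rw [coe_insert, coe_erase]
    exact Set.insert_subset hxy (Set.sdiff_subset.trans hsub)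
  · rw [coe_insert, coe_erase, Set.insert_sdiff_singleton_comm hne]
    exact SimpleGraph.connected_fromEdgeSet_exchange hconn hxy.ne hnot hp he
  · rw [card_insert_of_notMem (fun h => hnot (mem_of_mem_erase h)), card_erase_of_mem heγ,
      Nat.sub_add_cancel (card_pos.2 ⟨e, heγ⟩), hcard]

theorem optimal_usage_max_on_cycle_general
    {V : Type*} [Fintype V] [DecidableEq V]
    (G : SimpleGraph V)
    (μ : Finset (Sym2 V) → ℝ) (hμ : IsPmf (spanningTrees G) μ)
    (hopt : EO (spanningTrees G) μ = MEO (spanningTrees G))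
    (γstar : Finset (Sym2 V)) (hγ : γstar ∈ spanningTrees G) (hpos : 0 < μ γstar)
    (x y : V) (hxy : G.Adj x y) (hnot : s(x, y) ∉ γstar) :
    ∀ p : (SimpleGraph.fromEdgeSet (↑γstar : Set (Sym2 V))).Walk x y, p.IsPath →
      ∀ e ∈ p.edges, eta (spanningTrees G) μ e ≤ eta (spanningTrees G) μ s(x, y) := by
  intro p hp e he
  have heγ : e ∈ γstar := p.mem_of_mem_edges_fromEdgeSet he
  have hweight := sum_eta_le_of_EO_eq_MEO hμ hopt hγ hpos
    (insert_erase_mem_spanningTrees hγ hxy hnot hp he)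
  rw [sum_insert (fun h => hnot (mem_of_mem_erase h)), ← add_sum_erase _ _ heγ] at hweight
  linarith

/-- stability of optimal pmfs. If `γ*` is in the support of an
MEO-optimal pmf and `e' = {x,y}` is an edge of `G` not in `γ*`, then `η*`
attains its maximum over the created cycle at `e'`; equivalently, every edge
on the (unique) path in `γ*` from `x` to `y` satisfies `η*(e) ≤ η*(e')`. -/
theorem optimal_usage_max_on_cycle
    {V : Type*} [Fintype V] [DecidableEq V]
    (G : SimpleGraph V) (hG : G.Connected) (hE : G.edgeFinset.Nonempty)
    (μ : Finset (Sym2 V) → ℝ) (hμ : IsPmf (spanningTrees G) μ)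
    (hopt : EO (spanningTrees G) μ = MEO (spanningTrees G))
    (γstar : Finset (Sym2 V)) (hγ : γstar ∈ spanningTrees G) (hpos : 0 < μ γstar)
    (x y : V) (hxy : G.Adj x y) (hnot : s(x, y) ∉ γstar) :
    ∀ p : (SimpleGraph.fromEdgeSet (↑γstar : Set (Sym2 V))).Walk x y, p.IsPath →
      ∀ e ∈ p.edges, eta (spanningTrees G) μ e ≤ eta (spanningTrees G) μ s(x, y) :=
  optimal_usage_max_on_cycle_general G μ hμ hopt γstar hγ hpos x y hxy hnot
end
end
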